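/- Let G ∈ (ℚ[u])⟦t⟧ satisfy G = 1 + t·u²·G³ (such G exists and is unique), and set F = (u − t)·G ∈ (ℚ[u])⟦t⟧, where (u − t) denotes the series whose t⁰-coefficient is the polynomial u and whose t¹-coefficient is the constant polynomial −1. For H ∈ (ℚ[u])⟦t⟧, write H₁ ∈ ℚ⟦t⟧ for the series obtained by evaluating each polynomial coefficient of H at u = 0, and H₂ ∈ ℚ⟦t⟧ for the series of coefficients of u¹ in the polynomial coefficients of H. Then: (1) F satisfies u²·F = u³ + t·(u²·F³ − 3·u² + 2·u·(F − F₁) − t·(F − F₁ − u·F₂)) in (ℚ[u])⟦t⟧; (2) F is the unique element of (ℚ[u])⟦t⟧ satisfying this equation (with F₁, F₂ defined from F as above); (3) F₁ = −t and F₂ = 1. -/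

import Mathlib

namespace Stmt15

/-- `u` as a constant power series in `(ℚ[u])⟦t⟧`. -/
noncomputable def Uu : PowerSeries (Polynomial ℚ) := PowerSeries.C Polynomial.X

/-- Evaluation of each polynomial coefficient at `u = 0`. -/
noncomputable def ev0 (H : PowerSeries (Polynomial ℚ)) : PowerSeries ℚ :=
  PowerSeries.map (Polynomial.evalRingHom (0 : ℚ)) H

/-- The series of coefficients of `u¹` in the polynomial coefficients of `H`. -/
noncomputable def coefU1 (H : PowerSeries (Polynomial ℚ)) : PowerSeries ℚ :=
  PowerSeries.mk fun n => (PowerSeries.coeff n H).coeff 1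

/-- Coefficientwise embedding `ℚ⟦t⟧ → (ℚ[u])⟦t⟧`. -/
noncomputable def embC (f : PowerSeries ℚ) : PowerSeries (Polynomial ℚ) :=
  PowerSeries.map (Polynomial.C : ℚ →+* Polynomial ℚ) f

/-- The functional equation
`u²·F = u³ + t·(u²·F³ − 3·u² + 2·u·(F − F₁) − t·(F − F₁ − u·F₂))`,
where `F₁ = ev0 F` and `F₂ = coefU1 F`. -/
noncomputable def FunEq (H : PowerSeries (Polynomial ℚ)) : Prop :=
  Uu ^ 2 * H = Uu ^ 3 + PowerSeries.X *
    (Uu ^ 2 * H ^ 3 - 3 * Uu ^ 2 + 2 * Uu * (H - embC (ev0 H))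
      - PowerSeries.X * (H - embC (ev0 H) - Uu * embC (coefU1 H)))

open PowerSeries

lemma Uu_sq : Uu ^ 2 = PowerSeries.C (Polynomial.X ^ 2) := by
  simp [Uu, map_pow]

lemma X_pow_cancel {E : PowerSeries (Polynomial ℚ)} {k : ℕ}
    (h : (X : PowerSeries (Polynomial ℚ)) ^ k ∣ Uu ^ 2 * E) : (X : PowerSeries (Polynomial ℚ)) ^ k ∣ E := by
  rw [X_pow_dvd_iff] at h ⊢
  intro n hn
  have := h n hn
  rw [Uu_sq, coeff_C_mul] at this
  rcases mul_eq_zero.mp this with h' | h'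
  · exact absurd h' (pow_ne_zero _ Polynomial.X_ne_zero)
  · exact h'

lemma eq_zero_of_forall_X_pow_dvd {E : PowerSeries (Polynomial ℚ)}
    (h : ∀ m, (X : PowerSeries (Polynomial ℚ)) ^ m ∣ E) : E = 0 := by
  refine PowerSeries.ext fun n => ?_
  have := (X_pow_dvd_iff.mp (h (n + 1))) n (Nat.lt_succ_self n)
  simpa using this

lemma coeff_embC_ev0 (E : PowerSeries (Polynomial ℚ)) (k : ℕ) :
    PowerSeries.coeff k (embC (ev0 E)) =
      Polynomial.C ((PowerSeries.coeff k E).eval 0) := by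
  simp [embC, ev0, coeff_map]

lemma coeff_embC_coefU1 (E : PowerSeries (Polynomial ℚ)) (k : ℕ) :
    PowerSeries.coeff k (embC (coefU1 E)) =
      Polynomial.C ((PowerSeries.coeff k E).coeff 1) := by
  simp [embC, coefU1, coeff_map, coeff_mk]

lemma dvd_embC_ev0 {E : PowerSeries (Polynomial ℚ)} {m : ℕ}
    (h : (X : PowerSeries (Polynomial ℚ)) ^ m ∣ E) :
    (X : PowerSeries (Polynomial ℚ)) ^ m ∣ embC (ev0 E) := by
  rw [X_pow_dvd_iff] at h ⊢
  intro k hk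
  rw [coeff_embC_ev0, h k hk]
  simp

lemma dvd_embC_coefU1 {E : PowerSeries (Polynomial ℚ)} {m : ℕ}
    (h : (X : PowerSeries (Polynomial ℚ)) ^ m ∣ E) :
    (X : PowerSeries (Polynomial ℚ)) ^ m ∣ embC (coefU1 E) := by
  rw [X_pow_dvd_iff] at h ⊢
  intro k hk
  rw [coeff_embC_coefU1, h k hk]
  simp

lemma embC_ev0_sub (A B : PowerSeries (Polynomial ℚ)) :
    embC (ev0 (A - B)) = embC (ev0 A) - embC (ev0 B) := by
  simp [embC, ev0, map_sub]

lemma coefU1_sub (A B : PowerSeries (Polynomial ℚ)) :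
    coefU1 (A - B) = coefU1 A - coefU1 B := by
  ext n
  simp [coefU1, map_sub, Polynomial.coeff_sub]

lemma embC_coefU1_sub (A B : PowerSeries (Polynomial ℚ)) :
    embC (coefU1 (A - B)) = embC (coefU1 A) - embC (coefU1 B) := by
  rw [coefU1_sub]; simp [embC, map_sub]

lemma ev0_Uu : ev0 Uu = 0 := by
  simp [ev0, Uu, PowerSeries.map_C]

lemma coefU1_one : coefU1 1 = 0 := by
  ext n
  simp only [coefU1, coeff_mk, PowerSeries.coeff_one, map_zero]
  split_ifs <;> simp [Polynomial.coeff_one]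

lemma coefU1_X_mul (A : PowerSeries (Polynomial ℚ)) :
    coefU1 ((X : PowerSeries (Polynomial ℚ)) * A) = X * coefU1 A := by
  ext n
  cases n with
  | zero => simp [coefU1, coeff_zero_X_mul]
  | succ k => simp [coefU1, coeff_succ_X_mul]

lemma coefU1_Uu_mul (A : PowerSeries (Polynomial ℚ)) :
    coefU1 (Uu * A) = ev0 A := by
  ext n
  simp only [coefU1, coeff_mk, Uu, coeff_C_mul, ev0, coeff_map,
    Polynomial.coe_evalRingHom]
  rw [Polynomial.coeff_X_mul, Polynomial.coeff_zero_eq_eval_zero]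

lemma coefU1_add (A B : PowerSeries (Polynomial ℚ)) :
    coefU1 (A + B) = coefU1 A + coefU1 B := by
  ext n
  simp [coefU1, map_add, Polynomial.coeff_add]

/-- If `G = 1 + t·u²·G³` (such a `G` exists and is unique) and `F = (u − t)·G`, then
`F` is the unique solution of the functional equation
`u²·F = u³ + t·(u²·F³ − 3·u² + 2·u·(F − F₁) − t·(F − F₁ − u·F₂))`,
and it satisfies `F₁ = −t` and `F₂ = 1`. -/
theorem double_root_example
    (G : PowerSeries (Polynomial ℚ))
    (hG : G = 1 + PowerSeries.X * Uu ^ 2 * G ^ 3)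
    (F : PowerSeries (Polynomial ℚ))
    (hFdef : F = (Uu - PowerSeries.X) * G) :
    (∃! G' : PowerSeries (Polynomial ℚ), G' = 1 + PowerSeries.X * Uu ^ 2 * G' ^ 3)
    ∧ FunEq F
    ∧ (∀ F' : PowerSeries (Polynomial ℚ), FunEq F' → F' = F)
    ∧ ev0 F = -PowerSeries.X
    ∧ coefU1 F = 1 := by
  -- basic facts about G
  have hev0G : ev0 G = 1 := by
    have h := congrArg ev0 hG
    rw [show ev0 (1 + X * Uu ^ 2 * G ^ 3)
        = 1 + X * (ev0 Uu) ^ 2 * (ev0 G) ^ 3 by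
      simp [ev0, map_add, map_mul, map_pow, map_one, PowerSeries.map_X]] at h
    rw [ev0_Uu] at h
    simpa using h
  have hcoefU1G : coefU1 G = 0 := by
    have h := congrArg coefU1 hG
    rw [show (1 : PowerSeries (Polynomial ℚ)) + X * Uu ^ 2 * G ^ 3
        = 1 + X * (Uu * (Uu * G ^ 3)) by ring] at h
    rw [coefU1_add, coefU1_one, coefU1_X_mul, coefU1_Uu_mul] at h
    have : ev0 (Uu * G ^ 3) = 0 := by
      rw [show ev0 (Uu * G ^ 3) = ev0 Uu * (ev0 G) ^ 3 by
        simp [ev0, map_mul, map_pow], ev0_Uu, zero_mul]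
    rw [this] at h
    simpa using h
  have hev0F : ev0 F = -X := by
    rw [hFdef, show ev0 ((Uu - X) * G) = (ev0 Uu - X) * ev0 G by
      simp [ev0, map_mul, map_sub, PowerSeries.map_X], ev0_Uu, hev0G]
    ring
  have hcoefU1F : coefU1 F = 1 := by
    rw [hFdef, show (Uu - X) * G = Uu * G - X * G by ring, coefU1_sub,
      coefU1_X_mul, coefU1_Uu_mul, hev0G, hcoefU1G]
    ring
  -- FunEq F
  have hembC1 : embC (ev0 F) = -X := by
    rw [hev0F]; simp [embC, map_neg, PowerSeries.map_X]
  have hembC2 : embC (coefU1 F) = 1 := by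
    rw [hcoefU1F]; simp [embC]
  have hFunEqF : FunEq F := by
    unfold FunEq
    rw [hembC1, hembC2, hFdef]
    linear_combination (Uu - (X : PowerSeries (Polynomial ℚ))) ^ 3 * hG
  -- uniqueness for G
  have hGuniq : ∀ G' : PowerSeries (Polynomial ℚ),
      G' = 1 + X * Uu ^ 2 * G' ^ 3 → G' = G := by
    intro G' hG'
    have hD : G' - G = X * (Uu ^ 2 * ((G' - G) * (G' ^ 2 + G' * G + G ^ 2))) := by
      linear_combination hG' - hG
    have hdvd : ∀ m, (X : PowerSeries (Polynomial ℚ)) ^ m ∣ (G' - G) := by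
      intro m
      induction m with
      | zero => simpa using dvd_refl (1 : PowerSeries (Polynomial ℚ))
      | succ k ih =>
        obtain ⟨A, hA⟩ := ih
        exact ⟨Uu ^ 2 * (A * (G' ^ 2 + G' * G + G ^ 2)), by
          rw [hD, hA]; ring⟩
    have := eq_zero_of_forall_X_pow_dvd hdvd
    exact sub_eq_zero.mp this
  -- uniqueness for FunEq
  have hFuniq : ∀ F' : PowerSeries (Polynomial ℚ), FunEq F' → F' = F := by
    intro F' hF'
    have hFE := hFunEqF
    unfold FunEq at hF' hFE
    set E := F' - F with hEdef
    have hE : Uu ^ 2 * E = X * (Uu ^ 2 * (E * (F' ^ 2 + F' * F + F ^ 2))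
        + 2 * Uu * (E - embC (ev0 E))
        - X * (E - embC (ev0 E) - Uu * embC (coefU1 E))) := by
      rw [hEdef, embC_ev0_sub, embC_coefU1_sub]
      linear_combination hF' - hFE
    have hdvd : ∀ m, (X : PowerSeries (Polynomial ℚ)) ^ m ∣ E := by
      intro m
      induction m with
      | zero => simpa using dvd_refl (1 : PowerSeries (Polynomial ℚ))
      | succ k ih =>
        have h1 : (X : PowerSeries (Polynomial ℚ)) ^ k ∣ embC (ev0 E) := dvd_embC_ev0 ih
        have h2 : (X : PowerSeries (Polynomial ℚ)) ^ k ∣ embC (coefU1 E) := dvd_embC_coefU1 ih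
        have hbr : (X : PowerSeries (Polynomial ℚ)) ^ k ∣
            (Uu ^ 2 * (E * (F' ^ 2 + F' * F + F ^ 2))
              + 2 * Uu * (E - embC (ev0 E))
              - X * (E - embC (ev0 E) - Uu * embC (coefU1 E))) := by
          refine dvd_sub (dvd_add ?_ ?_) ?_
          · exact ((ih.mul_right _).mul_left _)
          · exact ((dvd_sub ih h1).mul_left _)
          · exact ((dvd_sub (dvd_sub ih h1) (h2.mul_left _)).mul_left _)
        have : (X : PowerSeries (Polynomial ℚ)) ^ (k + 1) ∣ Uu ^ 2 * E := by
          rw [hE]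
          obtain ⟨B, hB⟩ := hbr
          exact ⟨B, by rw [hB]; ring⟩
        exact X_pow_cancel this
    have := eq_zero_of_forall_X_pow_dvd hdvd
    exact sub_eq_zero.mp this
  exact ⟨⟨G, hG, hGuniq⟩, hFunEqF, hFuniq, hev0F, hcoefU1F⟩

end Stmt15
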